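/- arXiv:1707.04762 — 3 statements merged into one kernel-verified Lean document; each statement's English description precedes it below -/
import Mathlib

section
/- (Normal ordering of a two-fold product.) In the Clifford algebra C(V_ℂ), for all x, y ∈ V one has (1/2)(x⁺ y⁺ + x⁺ y⁻ − y⁺ x⁻ + x⁻ y⁻) = x y − ⟨x|y⟩_J · 1. -/
noncomputable section
open TensorProduct ComplexConjugate

variable (V : Type*) [NormedAddCommGroup V] [InnerProductSpace ℝ V]

/-- The complexification `V_ℂ = ℂ ⊗[ℝ] V` of a real inner product space `V`. -/
abbrev Complexification : Type _ := ℂ ⊗[ℝ] V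

variable {V}

/-- The canonical embedding of `V` into its complexification. -/
def incl (v : V) : Complexification V := (1 : ℂ) ⊗ₜ[ℝ] v

/-- The canonical conjugation `w ↦ w̄` on the complexification. -/
def conjC : Complexification V →ₗ[ℝ] Complexification V :=
  TensorProduct.map Complex.conjAe.toLinearMap LinearMap.id

variable (V)

/-- The complex-bilinear extension `(·|·)` of the real inner product to the complexification. -/
def bilinC : LinearMap.BilinForm ℂ (Complexification V) :=
  LinearMap.BilinForm.baseChange ℂ (innerₗ V : LinearMap.BilinForm ℝ V)

/-- The quadratic form `z ↦ (z|z)` on the complexification; `C(V_ℂ)` is its Clifford algebra. -/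
def quadC : QuadraticForm ℂ (Complexification V) :=
  LinearMap.BilinMap.toQuadraticMap (bilinC V)

variable {V}

/-- The hermitian inner product `⟨x|y⟩ = (x̄|y)` on the complexification. -/
def hermC (x y : Complexification V) : ℂ := bilinC V (conjC x) y

/-- `⟨x|y⟩_J = (x|y) + i (Jx|y)`. -/
def innerJ (J : V →ₗ[ℝ] V) (x y : V) : ℂ :=
  ((inner ℝ x y : ℝ) : ℂ) + Complex.I * ((inner ℝ (J x) y : ℝ) : ℂ)

/-- `v⁺ = (v - iJv)/√2`. -/
def plusPart (J : V →ₗ[ℝ] V) (v : V) : Complexification V :=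
  ((Real.sqrt 2 : ℂ))⁻¹ • (incl v - Complex.I • incl (J v))

/-- `v⁻ = (v + iJv)/√2`. -/
def minusPart (J : V →ₗ[ℝ] V) (v : V) : Complexification V :=
  ((Real.sqrt 2 : ℂ))⁻¹ • (incl v + Complex.I • incl (J v))

lemma swap_aux (a b : V) :
    CliffordAlgebra.ι (quadC V) (incl b) * CliffordAlgebra.ι (quadC V) (incl a) =
      ((2 : ℂ) * ((inner ℝ a b : ℝ) : ℂ)) • 1 -
        CliffordAlgebra.ι (quadC V) (incl a) * CliffordAlgebra.ι (quadC V) (incl b) := by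
  have h := CliffordAlgebra.ι_mul_ι_add_swap (Q := quadC V) (incl a) (incl b)
  have hp : QuadraticMap.polar (quadC V) (incl a) (incl b) = (2 : ℂ) * ((inner ℝ a b : ℝ) : ℂ) := by
    rw [quadC, LinearMap.BilinMap.polar_toQuadraticMap]
    simp [bilinC, incl, LinearMap.BilinForm.baseChange_tmul, innerₗ_apply_apply,
      Complex.real_smul, real_inner_comm b a]
    ring
  rw [hp] at h
  rw [eq_sub_iff_add_eq, add_comm, h, Algebra.algebraMap_eq_smul_one]

/-- normal ordering of a two-fold product: in `C(V_ℂ)`,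
`(1/2)(x⁺ y⁺ + x⁺ y⁻ − y⁺ x⁻ + x⁻ y⁻) = x y − ⟨x|y⟩_J 1`. -/
theorem normal_order_two
    [FiniteDimensional ℝ V] (J : V →ₗ[ℝ] V)
    (hJ2 : ∀ v, J (J v) = -v)
    (hJo : ∀ x y : V, (inner ℝ (J x) (J y) : ℝ) = inner ℝ x y) :
    ∀ x y : V,
      (1 / 2 : ℂ) •
        (CliffordAlgebra.ι (quadC V) (plusPart J x) * CliffordAlgebra.ι (quadC V) (plusPart J y) +
         CliffordAlgebra.ι (quadC V) (plusPart J x) * CliffordAlgebra.ι (quadC V) (minusPart J y) -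
         CliffordAlgebra.ι (quadC V) (plusPart J y) * CliffordAlgebra.ι (quadC V) (minusPart J x) +
         CliffordAlgebra.ι (quadC V) (minusPart J x) * CliffordAlgebra.ι (quadC V) (minusPart J y)) =
      CliffordAlgebra.ι (quadC V) (incl x) * CliffordAlgebra.ι (quadC V) (incl y) -
        innerJ J x y • (1 : CliffordAlgebra (quadC V)) := by
  intro x y
  have hxJy : ((inner ℝ x (J y) : ℝ) : ℂ) = -((inner ℝ (J x) y : ℝ) : ℂ) := by
    have h := hJo x (J y)
    rw [hJ2] at h
    rw [← h]
    push_cast [inner_neg_right]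
    ring
  have hJJ : ((inner ℝ (J x) (J y) : ℝ) : ℂ) = ((inner ℝ x y : ℝ) : ℂ) := by
    rw [hJo]
  have hs2 : (((Real.sqrt 2 : ℝ) : ℂ))⁻¹ * (((Real.sqrt 2 : ℝ) : ℂ))⁻¹ = 1 / 2 := by
    rw [← mul_inv]
    norm_cast
    rw [Real.mul_self_sqrt (by norm_num)]
    norm_num
  simp only [plusPart, minusPart, map_smul, map_add, map_sub, innerJ]
  simp only [smul_mul_assoc, mul_smul_comm, sub_mul, mul_sub, add_mul, mul_add, smul_sub,
    smul_add, smul_smul]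
  rw [swap_aux x y, swap_aux (J x) y, swap_aux x (J y), swap_aux (J x) (J y), hJJ, hxJy]
  have hs2' : (((Real.sqrt 2 : ℝ) : ℂ))⁻¹ ^ 2 = 1 / 2 := by rw [sq]; exact hs2
  match_scalars <;> first | ring1 | (ring_nf; simp only [hs2', Complex.I_sq]; ring1)
end
end

section
/- (Uniqueness of the Clifford trace.) If τ₁ and τ₂ are two linear functionals C(V_ℂ) → ℂ each satisfying τ(1) = 1, τ ∘ Γ = τ, and τ(ab) = τ(ba) for all a, b ∈ C(V_ℂ), then τ₁ = τ₂. -/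
noncomputable section
open TensorProduct ComplexConjugate

variable (V : Type*) [NormedAddCommGroup V] [InnerProductSpace ℝ V]

variable {V}

variable (V)

variable {V}

section TraceAux

open CliffordAlgebra

variable {M : Type*} [AddCommGroup M] [Module ℂ M] {Q : QuadraticForm ℂ M}

/-- Key identity: `ι v * x - involute x * ι v = (polar v) ⌋ x`. -/
lemma clifford_key_ident (v : M) (x : CliffordAlgebra Q) :
    ι Q v * x - involute x * ι Q v = contractLeft (Q.polarBilin v) x := by
  have hx : x ∈ (⊤ : Submodule ℂ (CliffordAlgebra Q)) := trivial
  rw [← iSup_ι_range_eq_top] at hx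
  refine Submodule.iSup_induction (motive := fun x => ι Q v * x - involute x * ι Q v
      = contractLeft (Q.polarBilin v) x) _ hx (fun n y hy => ?_) (by simp) ?_
  · induction hy using Submodule.pow_induction_on_left' with
    | algebraMap r =>
        rw [contractLeft_algebraMap, AlgHom.commutes, Algebra.commutes, sub_self]
    | add x y i hx hy ihx ihy =>
        rw [map_add, mul_add, add_mul, map_add, ← ihx, ← ihy]; abel
    | mem_mul m hm i x hx ih =>
        obtain ⟨w, rfl⟩ := hm
        have h2 : involute x * ι Q v = ι Q v * x - contractLeft (Q.polarBilin v) x := by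
          rw [← ih]; noncomm_ring
        have hpolar := ι_mul_ι_add_swap (Q := Q) v w
        rw [contractLeft_ι_mul, map_mul, involute_ι, mul_assoc, h2,
          show ((Q.polarBilin v) w : ℂ) = QuadraticMap.polar Q v w from rfl,
          Algebra.smul_def, ← hpolar]
        noncomm_ring
  · intro x y hx hy
    rw [map_add, mul_add, add_mul, map_add, ← hx, ← hy]; abel

lemma clifford_involute_mem_pow {n : ℕ} {x : CliffordAlgebra Q}
    (hx : x ∈ (LinearMap.range (ι Q)) ^ n) :
    involute x ∈ (LinearMap.range (ι Q)) ^ n := by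
  induction hx using Submodule.pow_induction_on_left' with
  | algebraMap r => rw [AlgHom.commutes]; exact Submodule.algebraMap_mem r
  | add x y i hx hy ihx ihy => rw [map_add]; exact add_mem ihx ihy
  | mem_mul m hm i x hx ih =>
      obtain ⟨w, rfl⟩ := hm
      have : involute (ι Q w * x) = ι Q (-w) * involute x := by
        rw [map_mul, involute_ι, map_neg, neg_mul]
      rw [this, pow_succ']
      exact Submodule.mul_mem_mul ⟨-w, rfl⟩ ih

lemma clifford_contract_mem_pow (d : Module.Dual ℂ M) {n : ℕ} {x : CliffordAlgebra Q}
    (hx : x ∈ (LinearMap.range (ι Q)) ^ n) :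
    contractLeft d x ∈ (LinearMap.range (ι Q)) ^ (n - 1) ∧
      (n = 0 → contractLeft d x = 0) := by
  induction hx using Submodule.pow_induction_on_left' with
  | algebraMap r =>
      rw [contractLeft_algebraMap]
      exact ⟨zero_mem _, fun _ => rfl⟩
  | add x y i hx hy ihx ihy =>
      rw [map_add]
      exact ⟨add_mem ihx.1 ihy.1, fun h => by rw [ihx.2 h, ihy.2 h, add_zero]⟩
  | mem_mul m hm i x hx ih =>
      obtain ⟨w, rfl⟩ := hm
      rw [contractLeft_ι_mul]
      refine ⟨?_, fun h => by omega⟩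
      have h1 : d w • x ∈ (LinearMap.range (ι Q)) ^ (i + 1 - 1) := by
        simpa using Submodule.smul_mem _ _ hx
      refine sub_mem h1 ?_
      rcases Nat.eq_zero_or_pos i with hi | hi
      · subst hi; rw [ih.2 rfl, mul_zero]; exact zero_mem _
      · have : (LinearMap.range (ι Q)) ^ (i + 1 - 1) =
            (LinearMap.range (ι Q)) * (LinearMap.range (ι Q)) ^ (i - 1) := by
          rw [← pow_succ']
          congr 1
          omega
        rw [this]
        exact Submodule.mul_mem_mul ⟨w, rfl⟩ ih.1

end TraceAux

/-- uniqueness of the Clifford trace: two normalized, grade-invariant,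
tracial linear functionals on `C(V_ℂ)` coincide. -/
theorem clifford_trace_unique
    [FiniteDimensional ℝ V]
    (τ₁ τ₂ : CliffordAlgebra (quadC V) →ₗ[ℂ] ℂ)
    (h₁one : τ₁ 1 = 1) (h₂one : τ₂ 1 = 1)
    (h₁Γ : ∀ a, τ₁ (CliffordAlgebra.involute a) = τ₁ a)
    (h₂Γ : ∀ a, τ₂ (CliffordAlgebra.involute a) = τ₂ a)
    (h₁tr : ∀ a b, τ₁ (a * b) = τ₁ (b * a))
    (h₂tr : ∀ a b, τ₂ (a * b) = τ₂ (b * a)) :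
    τ₁ = τ₂ := by
  open CliffordAlgebra in
  set σ : CliffordAlgebra (quadC V) →ₗ[ℂ] ℂ := τ₁ - τ₂ with hσ
  have hσ1 : σ 1 = 0 := by simp [hσ, h₁one, h₂one]
  have hσΓ : ∀ a, σ (involute a) = σ a := by
    intro a; simp [hσ, h₁Γ a, h₂Γ a]
  have hσtr : ∀ a b, σ (a * b) = σ (b * a) := by
    intro a b; simp [hσ, h₁tr a b, h₂tr a b]
  have main : ∀ n : ℕ, ∀ x ∈ (LinearMap.range (ι (quadC V))) ^ n, σ x = 0 := by
    intro n
    induction n using Nat.strong_induction_on with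
    | _ n IH =>
      obtain _ | n := n
      · intro x hx
        rw [pow_zero] at hx
        obtain ⟨r, rfl⟩ := Submodule.mem_one.mp hx
        rw [Algebra.algebraMap_eq_smul_one, map_smul, hσ1, smul_zero]
      · intro x hx
        rw [pow_succ'] at hx
        refine Submodule.mul_induction_on hx (fun m hm y hy => ?_)
          (fun a b ha hb => by rw [map_add, ha, hb, add_zero])
        obtain ⟨v, rfl⟩ := hm
        set e : CliffordAlgebra (quadC V) := (2⁻¹ : ℂ) • (y + involute y) with he_def
        set o : CliffordAlgebra (quadC V) := (2⁻¹ : ℂ) • (y - involute y) with ho_def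
        have hy_eq : y = e + o := by
          rw [he_def, ho_def, ← smul_add]
          rw [show y + involute y + (y - involute y) = (2 : ℂ) • y by
            rw [two_smul]; abel]
          rw [smul_smul]; norm_num
        have he_inv : involute e = e := by
          simp [he_def, map_add, involute_involute, add_comm]
        have ho_inv : involute o = -o := by
          simp only [ho_def, map_smul, map_sub, involute_involute, ← smul_neg]
          congr 1; abel
        have he_mem : e ∈ (LinearMap.range (ι (quadC V))) ^ n :=
          Submodule.smul_mem _ _ (add_mem hy (clifford_involute_mem_pow hy))
        have ho_mem : o ∈ (LinearMap.range (ι (quadC V))) ^ n :=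
          Submodule.smul_mem _ _ (sub_mem hy (clifford_involute_mem_pow hy))
        have hσe : σ (ι (quadC V) v * e) = 0 := by
          have h1 : involute (ι (quadC V) v * e) = -(ι (quadC V) v * e) := by
            rw [map_mul, involute_ι, he_inv, neg_mul]
          have h2 := hσΓ (ι (quadC V) v * e)
          rw [h1, map_neg] at h2
          linear_combination (-(1 : ℂ) / 2) * h2
        have hσo : σ (ι (quadC V) v * o) = 0 := by
          have hkey := clifford_key_ident v o
          rw [ho_inv, neg_mul, sub_neg_eq_add] at hkey
          have h3 : σ (ι (quadC V) v * o) = σ (o * ι (quadC V) v) := hσtr _ _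
          have h4 : σ (ι (quadC V) v * o + o * ι (quadC V) v) = σ (contractLeft ((quadC V).polarBilin v) o) := by
            rw [hkey]
          rw [map_add] at h4
          have h5 : σ (contractLeft ((quadC V).polarBilin v) o) = 0 :=
            IH (n - 1) (by omega) _ (clifford_contract_mem_pow _ ho_mem).1
          rw [h5] at h4
          linear_combination ((1 : ℂ) / 2) * h4 + ((1 : ℂ) / 2) * h3
        rw [hy_eq, mul_add, map_add, hσe, hσo, add_zero]
  have hall : ∀ x : CliffordAlgebra (quadC V), σ x = 0 := by
    intro x
    have hx : x ∈ (⊤ : Submodule ℂ (CliffordAlgebra (quadC V))) := trivial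
    rw [← iSup_ι_range_eq_top] at hx
    exact Submodule.iSup_induction (motive := fun x => σ x = 0) _ hx main (map_zero σ)
      (fun a b ha hb => by show σ (a + b) = 0; rw [map_add, ha, hb, add_zero])
  ext x
  have := hall x
  simpa [hσ, sub_eq_zero] using this
end
end

section
/- (Trace of antinormally ordered products; the content of ℰ = τ ∘ ν.) Let τ : C(V_ℂ) → ℂ be any linear functional with τ(1) = 1, τ ∘ Γ = τ, and τ(ab) = τ(ba) for all a, b ∈ C(V_ℂ). Then for any v₁, …, v_k ∈ V and w₁, …, w_l ∈ V: if k ≠ l then τ(v_k⁻ ⋯ v₁⁻ · w₁⁺ ⋯ w_l⁺) = 0, and if k = l then τ(v_k⁻ ⋯ v₁⁻ · w₁⁺ ⋯ w_k⁺) = det M, where M is the k × k matrix with entries M_{ij} = ⟨v_i|w_j⟩_J. -/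
noncomputable section
open TensorProduct ComplexConjugate

variable (V : Type*) [NormedAddCommGroup V] [InnerProductSpace ℝ V]

variable {V}

variable (V)

variable {V}

local notation "𝔠" => CliffordAlgebra.ι (quadC V)

lemma bilinC_incl (x y : V) : bilinC V (incl x) (incl y) = ((inner ℝ x y : ℝ) : ℂ) := by
  simp [bilinC, incl, LinearMap.BilinForm.baseChange_tmul]

section J
variable (J : V →ₗ[ℝ] V) (hJ2 : ∀ v, J (J v) = -v)
    (hJo : ∀ x y : V, (inner ℝ (J x) (J y) : ℝ) = inner ℝ x y)

include hJ2 hJo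

lemma inner_J_left (x y : V) : (inner ℝ (J x) y : ℝ) = - inner ℝ x (J y) := by
  have h : (inner ℝ (J x) (J (J y)) : ℝ) = inner ℝ x (J y) := hJo x (J y)
  rw [hJ2 y, inner_neg_right] at h
  linarith

lemma inner_J_right (x y : V) : (inner ℝ x (J y) : ℝ) = - inner ℝ (J x) y := by
  have := inner_J_left J hJ2 hJo x y
  linarith

lemma sqrt2inv_sq : ((Real.sqrt 2 : ℂ))⁻¹ * ((Real.sqrt 2 : ℂ))⁻¹ = 2⁻¹ := by
  have h : ((Real.sqrt 2 : ℝ) : ℂ) * ((Real.sqrt 2 : ℝ) : ℂ) = 2 := by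
    norm_cast
    exact Real.mul_self_sqrt (by norm_num)
  rw [← mul_inv, h]

lemma bilin_mm (v v' : V) : bilinC V (minusPart J v) (minusPart J v') = 0 := by
  simp only [minusPart, map_add, map_smul, LinearMap.add_apply, LinearMap.smul_apply,
    smul_eq_mul, bilinC_incl, hJo, inner_J_left J hJ2 hJo]
  push_cast
  linear_combination (((Real.sqrt 2 : ℝ)) : ℂ)⁻¹ * (((Real.sqrt 2 : ℝ)) : ℂ)⁻¹ *
    ((inner ℝ v v' : ℝ) : ℂ) * Complex.I_mul_I

lemma bilin_pp (w w' : V) : bilinC V (plusPart J w) (plusPart J w') = 0 := by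
  simp only [plusPart, map_add, map_sub, map_smul, LinearMap.add_apply, LinearMap.sub_apply,
    LinearMap.smul_apply, smul_eq_mul, bilinC_incl, hJo, inner_J_left J hJ2 hJo]
  push_cast
  linear_combination (((Real.sqrt 2 : ℝ)) : ℂ)⁻¹ * (((Real.sqrt 2 : ℝ)) : ℂ)⁻¹ *
    ((inner ℝ w w' : ℝ) : ℂ) * Complex.I_mul_I

lemma bilin_mp (v w : V) : bilinC V (minusPart J v) (plusPart J w) = innerJ J v w := by
  simp only [minusPart, plusPart, map_add, map_sub, map_smul, LinearMap.add_apply,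
    LinearMap.sub_apply, LinearMap.smul_apply, smul_eq_mul, bilinC_incl, hJo,
    inner_J_right J hJ2 hJo, innerJ]
  push_cast
  linear_combination (((inner ℝ v w : ℝ) : ℂ) + 2*Complex.I*((inner ℝ (J v) w : ℝ) : ℂ)
      - Complex.I*Complex.I*((inner ℝ v w : ℝ) : ℂ)) * sqrt2inv_sq J hJ2 hJo
    - 2⁻¹*((inner ℝ v w : ℝ) : ℂ) * Complex.I_mul_I

lemma bilin_pm (w v : V) : bilinC V (plusPart J w) (minusPart J v) = innerJ J v w := by
  simp only [minusPart, plusPart, map_add, map_sub, map_smul, LinearMap.add_apply,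
    LinearMap.sub_apply, LinearMap.smul_apply, smul_eq_mul, bilinC_incl, hJo,
    inner_J_right J hJ2 hJo, innerJ, real_inner_comm w v, real_inner_comm (J w) v]
  have hb : (inner ℝ (J v) w : ℝ) = - inner ℝ (J w) v := by
    rw [inner_J_left J hJ2 hJo, real_inner_comm]
  rw [hb]
  push_cast
  linear_combination (((inner ℝ w v : ℝ) : ℂ) - 2*Complex.I*((inner ℝ (J w) v : ℝ) : ℂ)
      - Complex.I*Complex.I*((inner ℝ w v : ℝ) : ℂ)) * sqrt2inv_sq J hJ2 hJo
    - 2⁻¹*((inner ℝ w v : ℝ) : ℂ) * Complex.I_mul_I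
omit hJ2 hJo in
lemma polar_quadC (x y : Complexification V) :
    QuadraticMap.polar (⇑(quadC V)) x y = bilinC V x y + bilinC V y x :=
  LinearMap.BilinMap.polar_toQuadraticMap (B := bilinC V) x y

/-- `ι(v⁻)` and `ι(v'⁻)` anticommute. -/
lemma cm_anticomm (v v' : V) :
    𝔠 (minusPart J v) * 𝔠 (minusPart J v') = -(𝔠 (minusPart J v') * 𝔠 (minusPart J v)) := by
  have h := CliffordAlgebra.ι_mul_ι_add_swap (Q := quadC V) (minusPart J v) (minusPart J v')
  rw [polar_quadC, bilin_mm J hJ2 hJo, bilin_mm J hJ2 hJo] at h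
  simp only [add_zero, map_zero] at h
  exact eq_neg_of_add_eq_zero_left h

/-- `ι(w⁺)` and `ι(w'⁺)` anticommute. -/
lemma cp_anticomm (w w' : V) :
    𝔠 (plusPart J w) * 𝔠 (plusPart J w') = -(𝔠 (plusPart J w') * 𝔠 (plusPart J w)) := by
  have h := CliffordAlgebra.ι_mul_ι_add_swap (Q := quadC V) (plusPart J w) (plusPart J w')
  rw [polar_quadC, bilin_pp J hJ2 hJo, bilin_pp J hJ2 hJo] at h
  simp only [add_zero, map_zero] at h
  exact eq_neg_of_add_eq_zero_left h

lemma cp_mul_cm (w v : V) :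
    𝔠 (plusPart J w) * 𝔠 (minusPart J v)
      = algebraMap ℂ _ (2 * innerJ J v w) - 𝔠 (minusPart J v) * 𝔠 (plusPart J w) := by
  have h := CliffordAlgebra.ι_mul_ι_comm (Q := quadC V) (plusPart J w) (minusPart J v)
  rw [polar_quadC, bilin_pm J hJ2 hJo, bilin_mp J hJ2 hJo, ← two_mul] at h
  exact h

/-- Reversed product of the `ι(vᵢ⁻)`. -/
def Rm (k : ℕ) (v : Fin k → V) : CliffordAlgebra (quadC V) :=
  (List.ofFn fun i => 𝔠 (minusPart J (v i))).reverse.prod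

/-- Product of the `ι(wⱼ⁺)`. -/
def Pp (l : ℕ) (w : Fin l → V) : CliffordAlgebra (quadC V) :=
  (List.ofFn fun j => 𝔠 (plusPart J (w j))).prod

omit hJ2 hJo in
lemma Rm_zero (v : Fin 0 → V) : Rm J 0 v = 1 := by simp [Rm]

omit hJ2 hJo in
lemma Pp_zero (w : Fin 0 → V) : Pp J 0 w = 1 := by simp [Pp]

omit hJ2 hJo in
lemma Rm_succ (k : ℕ) (v : Fin (k+1) → V) :
    Rm J (k+1) v = 𝔠 (minusPart J (v (Fin.last k))) * Rm J k (v ∘ Fin.castSucc) := by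
  rw [Rm, List.ofFn_succ', List.concat_eq_append, List.reverse_append]
  simp [Rm, Function.comp]

omit hJ2 hJo in
lemma Pp_succ (l : ℕ) (w : Fin (l+1) → V) :
    Pp J (l+1) w = Pp J l (w ∘ Fin.castSucc) * 𝔠 (plusPart J (w (Fin.last l))) := by
  rw [Pp, List.ofFn_succ', List.concat_eq_append, List.prod_append]
  simp [Pp, Function.comp]

/-- Moving `ι(u⁻)` through a reversed product of `ι(vᵢ⁻)`'s. -/
lemma cm_move (k : ℕ) : ∀ (v : Fin k → V) (u : V),
    𝔠 (minusPart J u) * Rm J k v = ((-1:ℂ)^k) • (Rm J k v * 𝔠 (minusPart J u)) := by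
  induction k with
  | zero => intro v u; rw [Rm_zero]; simp
  | succ k ih =>
    intro v u
    rw [Rm_succ, ← mul_assoc, cm_anticomm J hJ2 hJo u (v (Fin.last k)), neg_mul, mul_assoc,
      ih (v ∘ Fin.castSucc) u, mul_smul_comm, ← mul_assoc, pow_succ, mul_neg_one, neg_smul]

/-- Moving `ι(w⁺)` through a product of `ι(wⱼ⁺)`'s. -/
lemma cp_move_p (l : ℕ) : ∀ (w' : Fin l → V) (w : V),
    𝔠 (plusPart J w) * Pp J l w' = ((-1:ℂ)^l) • (Pp J l w' * 𝔠 (plusPart J w)) := by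
  induction l with
  | zero => intro w' w; rw [Pp_zero]; simp
  | succ l ih =>
    intro w' w
    rw [Pp_succ, ← mul_assoc, ih (w' ∘ Fin.castSucc) w, smul_mul_assoc, mul_assoc,
      cp_anticomm J hJ2 hJo w (w' (Fin.last l)), mul_neg, ← mul_assoc, pow_succ, mul_neg_one]
    rw [smul_neg, neg_smul, mul_assoc]

lemma cp_move_m (k : ℕ) : ∀ (v : Fin (k+1) → V) (w : V),
    𝔠 (plusPart J w) * Rm J (k+1) v
      = (∑ i : Fin (k+1), ((-1:ℂ)^((i:ℕ)+k) * (2 * innerJ J (v i) w)) • Rm J k (v ∘ i.succAbove))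
        + ((-1:ℂ)^(k+1)) • (Rm J (k+1) v * 𝔠 (plusPart J w)) := by
  induction k with
  | zero =>
    intro v w
    rw [Rm_succ, Rm_zero, mul_one, cp_mul_cm J hJ2 hJo, Fin.sum_univ_one, Rm_zero]
    simp [Algebra.algebraMap_eq_smul_one, sub_eq_add_neg]
  | succ k ih =>
    intro v w
    have hsum : ∀ i' : Fin (k+1),
        Rm J (k+1) (v ∘ (Fin.castSucc i').succAbove)
          = 𝔠 (minusPart J (v (Fin.last (k+1)))) * Rm J k ((v ∘ Fin.castSucc) ∘ i'.succAbove) := by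
      intro i'
      rw [Rm_succ]
      have h1 : (v ∘ (Fin.castSucc i').succAbove) (Fin.last k) = v (Fin.last (k+1)) := by
        simp only [Function.comp_apply]
        rw [Fin.succAbove_castSucc_of_le i' (Fin.last k) (Fin.le_last i'), Fin.succ_last]
      have h2 : (v ∘ (Fin.castSucc i').succAbove) ∘ Fin.castSucc = (v ∘ Fin.castSucc) ∘ i'.succAbove := by
        funext j
        simp only [Function.comp_apply, Fin.castSucc_succAbove_castSucc]
      rw [h1, h2]
    have hterm : ∀ i' : Fin (k+1),
        ((-1:ℂ)^(((Fin.castSucc i' : Fin (k+2)) : ℕ)+(k+1)) * (2 * innerJ J (v (Fin.castSucc i')) w))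
            • Rm J (k+1) (v ∘ (Fin.castSucc i').succAbove)
          = -(((-1:ℂ)^((i':ℕ)+k) * (2 * innerJ J ((v ∘ Fin.castSucc) i') w))
                • (𝔠 (minusPart J (v (Fin.last (k+1)))) * Rm J k ((v ∘ Fin.castSucc) ∘ i'.succAbove))) := by
      intro i'
      rw [hsum i', ← neg_smul, Fin.coe_castSucc]
      congr 1
      simp only [Function.comp_apply]
      rw [show (i':ℕ)+(k+1) = ((i':ℕ)+k)+1 by ring, pow_succ, mul_neg_one]
      ring
    rw [Rm_succ J (k+1) v, ← mul_assoc, cp_mul_cm J hJ2 hJo, sub_mul, mul_assoc,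
      ih (v ∘ Fin.castSucc) w, ← Algebra.smul_def, mul_add, Finset.mul_sum]
    conv_rhs => rw [Fin.sum_univ_castSucc]
    simp only [hterm, mul_smul_comm, Fin.succAbove_last, Fin.val_last]
    rw [Finset.sum_neg_distrib]
    have h1 : ((-1:ℂ)^((k+1)+(k+1)) * (2 * innerJ J (v (Fin.last (k+1))) w)) = 2 * innerJ J (v (Fin.last (k+1))) w := by
      rw [show (k+1)+(k+1) = 2*(k+1) by ring, pow_mul]
      norm_num
    rw [h1]
    have h2 : ((-1:ℂ)^(k+1)) • (𝔠 (minusPart J (v (Fin.last (k+1)))) * (Rm J (k+1) (v ∘ Fin.castSucc) * 𝔠 (plusPart J w)))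
        = -((-1:ℂ)^(k+1+1) • (𝔠 (minusPart J (v (Fin.last (k+1)))) * Rm J (k+1) (v ∘ Fin.castSucc) * 𝔠 (plusPart J w))) := by
      rw [← mul_assoc, ← neg_smul]
      congr 1
      rw [pow_succ (-1:ℂ) (k+1), mul_neg_one, neg_neg]
    rw [h2]
    abel

omit hJ2 hJo in
lemma involute_Rm (k : ℕ) : ∀ (v : Fin k → V),
    CliffordAlgebra.involute (Rm J k v) = ((-1:ℂ)^k) • Rm J k v := by
  induction k with
  | zero => intro v; rw [Rm_zero]; simp
  | succ k ih =>
    intro v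
    rw [Rm_succ, map_mul, CliffordAlgebra.involute_ι, ih, mul_smul_comm, neg_mul,
      ← Rm_succ, smul_neg, ← neg_smul, pow_succ, mul_neg_one]

omit hJ2 hJo in
lemma involute_Pp (l : ℕ) : ∀ (w : Fin l → V),
    CliffordAlgebra.involute (Pp J l w) = ((-1:ℂ)^l) • Pp J l w := by
  induction l with
  | zero => intro w; rw [Pp_zero]; simp
  | succ l ih =>
    intro w
    rw [Pp_succ, map_mul, CliffordAlgebra.involute_ι, ih, smul_mul_assoc, mul_neg,
      ← Pp_succ, smul_neg, ← neg_smul, pow_succ, mul_neg_one]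

section tau
variable (τ : CliffordAlgebra (quadC V) →ₗ[ℂ] ℂ)
    (hτone : τ 1 = 1)
    (hτΓ : ∀ a, τ (CliffordAlgebra.involute a) = τ a)
    (hτtr : ∀ a b, τ (a * b) = τ (b * a))

omit hJ2 hJo in
include hτΓ in
lemma odd_vanish (k l : ℕ) (h : Odd (k + l)) (v : Fin k → V) (w : Fin l → V) :
    τ (Rm J k v * Pp J l w) = 0 := by
  have h1 := hτΓ (Rm J k v * Pp J l w)
  rw [map_mul, involute_Rm, involute_Pp, smul_mul_assoc, mul_smul_comm, smul_smul,
    ← pow_add, h.neg_one_pow, neg_one_smul, map_neg] at h1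
  linear_combination (-1/2 : ℂ) * h1

include hτtr in
lemma pure_m_vanish (n : ℕ) (hn : Odd n) (v : Fin (n+1) → V) :
    τ (Rm J (n+1) v) = 0 := by
  have h1 : τ (Rm J (n+1) v) = τ (Rm J n (v ∘ Fin.castSucc) * 𝔠 (minusPart J (v (Fin.last n)))) := by
    rw [Rm_succ, hτtr]
  have h2 : Rm J n (v ∘ Fin.castSucc) * 𝔠 (minusPart J (v (Fin.last n)))
      = ((-1:ℂ)^n) • (𝔠 (minusPart J (v (Fin.last n))) * Rm J n (v ∘ Fin.castSucc)) := by
    rw [cm_move J hJ2 hJo n (v ∘ Fin.castSucc), smul_smul, ← pow_add,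
      Even.neg_one_pow ⟨n, rfl⟩, one_smul]
  rw [h2, map_smul, hn.neg_one_pow, ← Rm_succ] at h1
  simp only [smul_eq_mul, neg_one_mul] at h1
  linear_combination (1/2 : ℂ) * h1

include hτtr in
lemma pure_p_vanish (n : ℕ) (hn : Odd n) (w : Fin (n+1) → V) :
    τ (Pp J (n+1) w) = 0 := by
  have h1 : τ (Pp J (n+1) w) = τ (𝔠 (plusPart J (w (Fin.last n))) * Pp J n (w ∘ Fin.castSucc)) := by
    rw [Pp_succ, hτtr]
  rw [cp_move_p J hJ2 hJo n (w ∘ Fin.castSucc), map_smul, hn.neg_one_pow, ← Pp_succ] at h1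
  simp only [smul_eq_mul, neg_one_mul] at h1
  linear_combination (1/2 : ℂ) * h1
include hτtr in
lemma key_rec (k l : ℕ) (hpar : Even (k + l)) (v : Fin (k+1) → V) (w : Fin (l+1) → V) :
    τ (Rm J (k+1) v * Pp J (l+1) w)
      = ∑ i : Fin (k+1), ((-1:ℂ)^((i:ℕ)+k) * innerJ J (v i) (w (Fin.last l)))
          * τ (Rm J k (v ∘ i.succAbove) * Pp J l (w ∘ Fin.castSucc)) := by
  have h0 : τ (Rm J (k+1) v * Pp J (l+1) w)
      = τ (𝔠 (plusPart J (w (Fin.last l))) * (Rm J (k+1) v * Pp J l (w ∘ Fin.castSucc))) := by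
    rw [Pp_succ, ← mul_assoc, hτtr]
  have hc : 𝔠 (plusPart J (w (Fin.last l))) * Pp J l (w ∘ Fin.castSucc)
      = ((-1:ℂ)^l) • (Pp J l (w ∘ Fin.castSucc) * 𝔠 (plusPart J (w (Fin.last l)))) :=
    cp_move_p J hJ2 hJo l (w ∘ Fin.castSucc) (w (Fin.last l))
  have h2 : τ (𝔠 (plusPart J (w (Fin.last l))) * (Rm J (k+1) v * Pp J l (w ∘ Fin.castSucc)))
      = (∑ i : Fin (k+1), ((-1:ℂ)^((i:ℕ)+k) * (2 * innerJ J (v i) (w (Fin.last l))))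
            * τ (Rm J k (v ∘ i.succAbove) * Pp J l (w ∘ Fin.castSucc)))
        + ((-1:ℂ)^(k+1+l)) * τ (Rm J (k+1) v * Pp J (l+1) w) := by
    rw [← mul_assoc, cp_move_m J hJ2 hJo k v (w (Fin.last l)), add_mul, Finset.sum_mul,
      smul_mul_assoc, map_add, map_smul, map_sum]
    congr 1
    · refine Finset.sum_congr rfl fun i _ => ?_
      rw [smul_mul_assoc, map_smul, smul_eq_mul]
    · rw [mul_assoc, hc, mul_smul_comm, map_smul, ← Pp_succ, smul_smul, ← pow_add, smul_eq_mul]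
  rw [h2] at h0
  rw [show k+1+l = (k+l)+1 from by ring, (Even.add_one hpar).neg_one_pow] at h0
  have hgoal : ∀ i : Fin (k+1), ((-1:ℂ)^((i:ℕ)+k) * (2 * innerJ J (v i) (w (Fin.last l))))
      * τ (Rm J k (v ∘ i.succAbove) * Pp J l (w ∘ Fin.castSucc))
      = 2 * (((-1:ℂ)^((i:ℕ)+k) * innerJ J (v i) (w (Fin.last l)))
          * τ (Rm J k (v ∘ i.succAbove) * Pp J l (w ∘ Fin.castSucc))) := fun i => by ring
  rw [Finset.sum_congr rfl (fun i _ => hgoal i), ← Finset.mul_sum] at h0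
  linear_combination (1/2 : ℂ) * h0

include hτΓ hτtr in
lemma vanish_main : ∀ (l k : ℕ) (v : Fin k → V) (w : Fin l → V), k ≠ l →
    τ (Rm J k v * Pp J l w) = 0 := by
  intro l
  induction l with
  | zero =>
    intro k v w hk
    rcases Nat.even_or_odd k with he | ho
    · match k, hk with
      | (n+1), hk =>
        rw [Pp_zero, mul_one]
        refine pure_m_vanish J hJ2 hJo τ hτtr n ?_ v
        rcases he with ⟨m, hm⟩
        exact ⟨m - 1, by omega⟩
    · exact odd_vanish J τ hτΓ k 0 (by simpa using ho) v w
  | succ l ih =>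
    intro k v w hk
    rcases Nat.even_or_odd (k + (l+1)) with he | ho
    · match k, hk with
      | 0, hk =>
        rw [Rm_zero, one_mul]
        refine pure_p_vanish J hJ2 hJo τ hτtr l ?_ w
        rcases he with ⟨m, hm⟩
        exact ⟨m - 1, by omega⟩
      | (k'+1), hk =>
        have hpar : Even (k' + l) := by
          rcases he with ⟨m, hm⟩
          exact ⟨m - 1, by omega⟩
        rw [key_rec J hJ2 hJo τ hτtr k' l hpar v w]
        refine Finset.sum_eq_zero fun i _ => ?_
        rw [ih k' (v ∘ i.succAbove) (w ∘ Fin.castSucc) (by omega)]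
        ring
    · exact odd_vanish J τ hτΓ k (l+1) ho v w

include hτone hτtr in
lemma det_main : ∀ (k : ℕ) (v w : Fin k → V),
    τ (Rm J k v * Pp J k w) = (Matrix.of fun i j => innerJ J (v i) (w j)).det := by
  intro k
  induction k with
  | zero =>
    intro v w
    rw [Rm_zero, Pp_zero, one_mul, hτone, Matrix.det_fin_zero]
  | succ k ih =>
    intro v w
    rw [key_rec J hJ2 hJo τ hτtr k k (⟨k, rfl⟩ : Even (k+k)) v w,
      Matrix.det_succ_column (Matrix.of fun i j => innerJ J (v i) (w j)) (Fin.last k)]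
    refine Finset.sum_congr rfl fun i _ => ?_
    rw [ih (v ∘ i.succAbove) (w ∘ Fin.castSucc)]
    have hmat : (Matrix.of fun i' j' => innerJ J ((v ∘ i.succAbove) i') ((w ∘ Fin.castSucc) j'))
        = (Matrix.of fun i j => innerJ J (v i) (w j)).submatrix i.succAbove ((Fin.last k).succAbove) := by
      funext i' j'
      simp [Matrix.submatrix_apply, Fin.succAbove_last]
    rw [hmat, Fin.val_last]
    simp only [Matrix.of_apply]

end tau

end J

/-- trace of antinormally ordered products; the content of `𝔼 = τ ∘ ν`:
for any normalized grade-invariant tracial functional `τ` on `C(V_ℂ)`,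
`τ(v_k⁻ ⋯ v₁⁻ w₁⁺ ⋯ w_l⁺)` vanishes if `k ≠ l` and equals `det (⟨v_i|w_j⟩_J)` if `k = l`. -/
theorem trace_of_antinormal_products
    [FiniteDimensional ℝ V] (J : V →ₗ[ℝ] V)
    (hJ2 : ∀ v, J (J v) = -v)
    (hJo : ∀ x y : V, (inner ℝ (J x) (J y) : ℝ) = inner ℝ x y)
    (τ : CliffordAlgebra (quadC V) →ₗ[ℂ] ℂ)
    (hτone : τ 1 = 1)
    (hτΓ : ∀ a, τ (CliffordAlgebra.involute a) = τ a)
    (hτtr : ∀ a b, τ (a * b) = τ (b * a)) :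
    (∀ (k l : ℕ) (v : Fin k → V) (w : Fin l → V), k ≠ l →
      τ ((List.ofFn fun i => 𝔠 (minusPart J (v i))).reverse.prod *
         (List.ofFn fun j => 𝔠 (plusPart J (w j))).prod) = 0) ∧
    (∀ (k : ℕ) (v w : Fin k → V),
      τ ((List.ofFn fun i => 𝔠 (minusPart J (v i))).reverse.prod *
         (List.ofFn fun j => 𝔠 (plusPart J (w j))).prod) =
        (Matrix.of fun i j => innerJ J (v i) (w j)).det) := by
  constructor
  · intro k l v w hkl
    exact vanish_main J hJ2 hJo τ hτΓ hτtr l k v w hkl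
  · intro k v w
    exact det_main J hJ2 hJo τ hτone hτtr k v w
end
end
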